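/- Let Ψ^1,...,Ψ^n be matrices with Ψ^j ∈ ℂ^{D×N_j}, and suppose ‖Ψ^j‖_F ≤ c · ‖(A^j)_d − A^j‖_F for each j, where c ≥ 0 and A^j ∈ ℂ^{D×N_j}. Let A = [A^1|...|A^n] and Ψ̃ = [Ψ^1|...|Ψ^n]. Then ‖Ψ̃‖_F ≤ c · ‖(A)_d − A‖_F. -/

import Mathlib

open Matrix

/-- Frobenius norm of a complex matrix. -/
noncomputable def frob {m n : Type*} [Fintype m] [Fintype n] (M : Matrix m n ℂ) : ℝ :=
  Real.sqrt (∑ i, ∑ j, ‖M i j‖ ^ 2)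

/-- `B` is a best rank-`d` approximation of `A` in Frobenius norm. -/
def IsBestRankApprox {m n : Type*} [Fintype m] [Fintype n] (d : ℕ)
    (A B : Matrix m n ℂ) : Prop :=
  B.rank ≤ d ∧ ∀ C : Matrix m n ℂ, C.rank ≤ d → frob (B - A) ≤ frob (C - A)

/-- The singular values of `M` : nonnegative square roots of the eigenvalues of `M * Mᴴ`
(unsorted enumeration). -/
noncomputable def singVals {D : ℕ} {n : Type*} [Fintype n] (M : Matrix (Fin D) n ℂ) :
    Fin D → ℝ :=
  fun i => Real.sqrt ((Matrix.isHermitian_mul_conjTranspose_self M).eigenvalues i)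

/-- `C` is a scaled left-singular-vector form of `M`, i.e. `C = U Σ = M V` for some
SVD `M = U Σ Vᴴ` of `M`: equivalently `C = M V` with `V` unitary and `Cᴴ C` diagonal with
nonnegative real entries. -/
def IsScaledLeftSV {D : ℕ} {n : Type*} [Fintype n] [DecidableEq n]
    (M C : Matrix (Fin D) n ℂ) : Prop :=
  ∃ V ∈ Matrix.unitaryGroup n ℂ, C = M * V ∧
    ∃ t : n → ℝ, (∀ j, 0 ≤ t j) ∧ Cᴴ * C = Matrix.diagonal (fun j => (t j : ℂ))

/-! Every column block of `(A)_d` has rank at most `d`, so it competes with the best rank-`d`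
approximation of the corresponding block `A^j`; summing squared Frobenius errors over the blocks
gives `∑_j ‖(A^j)_d − A^j‖² ≤ ‖(A)_d − A‖²`, and the blockwise hypothesis does the rest.
The hypothesis only bites once best approximations `(A^j)_d` exist: they do, as nearest points
of `{rank ≤ d}`, which is closed because having `d + 1` independent image vectors is an open
condition. -/

theorem Matrix.isClosed_setOf_rank_le {𝕜 : Type*} [NontriviallyNormedField 𝕜] [CompleteSpace 𝕜]
    {m n : Type*} [Fintype m] [Fintype n] (d : ℕ) :
    IsClosed {M : Matrix m n 𝕜 | M.rank ≤ d} := by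
  classical
  let toCLM : Matrix m n 𝕜 →ₗ[𝕜] (n → 𝕜) →L[𝕜] (m → 𝕜) :=
    LinearMap.toContinuousLinearMap.toLinearMap ∘ₗ toLin'.toLinearMap
  have := (isOpen_setOfPred_nat_le_rank (d + 1)).isClosed_compl.preimage
    toCLM.continuous_of_finiteDimensional
  convert this using 2 with M
  simp [toCLM, Matrix.rank, LinearMap.rank, ← Module.finrank_eq_rank, toLin'_apply',
    Set.compl_ofPred]
  rfl

section Frobenius
variable {m n : Type*} [Fintype m] [Fintype n]

theorem frob_nonneg (M : Matrix m n ℂ) : 0 ≤ frob M :=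
  Real.sqrt_nonneg _

theorem frob_sq (M : Matrix m n ℂ) : frob M ^ 2 = ∑ i, ∑ j, ‖M i j‖ ^ 2 :=
  Real.sq_sqrt (by positivity)

attribute [local instance] Matrix.frobeniusNormedAddCommGroup Matrix.frobeniusNormedSpace

theorem frob_eq_norm (M : Matrix m n ℂ) : frob M = ‖M‖ := by
  rw [frob, frobenius_norm_def, Real.sqrt_eq_rpow]
  simp

theorem exists_isBestRankApprox (d : ℕ) (A : Matrix m n ℂ) : ∃ B, IsBestRankApprox d A B := by
  have := FiniteDimensional.proper_rclike ℂ (Matrix m n ℂ)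
  obtain ⟨B, hB, hdist⟩ := (isClosed_setOf_rank_le d).exists_infDist_eq_dist ⟨0, by simp⟩ A
  refine ⟨B, hB, fun C hC => ?_⟩
  rw [frob_eq_norm, frob_eq_norm, ← dist_eq_norm, ← dist_eq_norm, dist_comm, ← hdist, dist_comm]
  exact Metric.infDist_le_dist_of_mem hC

end Frobenius

section Blocks
variable {m ι : Type*} [Fintype m] [Fintype ι] {κ : ι → Type*} [∀ i, Fintype (κ i)]

theorem frob_sq_eq_sum_frob_sq_blocks (M : Matrix m (Σ i, κ i) ℂ) :
    frob M ^ 2 = ∑ i, frob (M.submatrix id (Sigma.mk i)) ^ 2 := by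
  simp only [frob_sq, Fintype.sum_sigma, submatrix_apply, id]
  exact Finset.sum_comm

theorem sum_frob_sq_bestRankApprox_blocks_le {d : ℕ} {A Ad : Matrix m (Σ i, κ i) ℂ}
    (hAd : Ad.rank ≤ d) {B : ∀ i, Matrix m (κ i) ℂ}
    (hB : ∀ i, IsBestRankApprox d (A.submatrix id (Sigma.mk i)) (B i)) :
    ∑ i, frob (B i - A.submatrix id (Sigma.mk i)) ^ 2 ≤ frob (Ad - A) ^ 2 := by
  rw [frob_sq_eq_sum_frob_sq_blocks]
  refine Finset.sum_le_sum fun i _ => pow_le_pow_left₀ (frob_nonneg _) ?_ 2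
  exact (hB i).2 _ ((Ad.rank_submatrix_le id (Sigma.mk i)).trans hAd)

end Blocks

/-- If each `‖Ψ^j‖_F ≤ c ‖(A^j)_d − A^j‖_F` blockwise, then for the concatenations,
`‖Ψ̃‖_F ≤ c ‖(A)_d − A‖_F`. -/
theorem stmt14 {D n : ℕ} {N : Fin n → ℕ} (d : ℕ) (c : ℝ) (hc : 0 ≤ c)
    (A Ψ : Matrix (Fin D) ((j : Fin n) × Fin (N j)) ℂ)
    (h : ∀ j, ∀ Adj : Matrix (Fin D) (Fin (N j)) ℂ,
          IsBestRankApprox d (Matrix.of fun r cc => A r ⟨j, cc⟩) Adj →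
          frob (Matrix.of fun r cc => Ψ r ⟨j, cc⟩) ≤
            c * frob (Adj - Matrix.of fun r cc => A r ⟨j, cc⟩))
    (Ad : Matrix (Fin D) ((j : Fin n) × Fin (N j)) ℂ)
    (hAd : IsBestRankApprox d A Ad) :
    frob Ψ ≤ c * frob (Ad - A) := by
  choose B hB using fun j => exists_isBestRankApprox d (A.submatrix id (Sigma.mk j))
  refine (pow_le_pow_iff_left₀ (frob_nonneg Ψ) (mul_nonneg hc (frob_nonneg _)) two_ne_zero).1 ?_
  calc frob Ψ ^ 2 = ∑ j, frob (Ψ.submatrix id (Sigma.mk j)) ^ 2 :=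
        frob_sq_eq_sum_frob_sq_blocks Ψ
    _ ≤ ∑ j, (c * frob (B j - A.submatrix id (Sigma.mk j))) ^ 2 :=
        Finset.sum_le_sum fun j _ => pow_le_pow_left₀ (frob_nonneg _) (h j (B j) (hB j)) 2
    _ = c ^ 2 * ∑ j, frob (B j - A.submatrix id (Sigma.mk j)) ^ 2 := by
        simp only [mul_pow, Finset.mul_sum]
    _ ≤ c ^ 2 * frob (Ad - A) ^ 2 :=
        mul_le_mul_of_nonneg_left (sum_frob_sq_bestRankApprox_blocks_le hAd.1 hB) (sq_nonneg c)
    _ = (c * frob (Ad - A)) ^ 2 := (mul_pow c _ 2).symm
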